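/- arXiv:math/0208188 — 3 statements merged into one kernel-verified Lean document; each statement's English description precedes it below -/
import Mathlib

section
/- Let G be a finite group acting orthogonally on a finite-dimensional real inner product space X with X^G = 0 (no nonzero fixed vectors). Then for loops x ∈ H¹(T¹, X) that are G-equivariant with respect to a G-action on T¹ through a finite subgroup of O(2) and the given action on X, there exists α > 0 such that ‖x‖_{L²} ≤ α ‖ẋ‖_{L²} for all equivariant loops x. In particular, the mean value of any equivariant loop lies outside any nonzero fixed direction, and a Poincaré-type inequality holds on the space of equivariant loops. -/
/-!
Poincaré–Wirtinger: a `C¹` function with zero mean on `[a, b]` is bounded pointwise by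
`∫ₐᵇ ‖ẋ‖`, since `(b - a) x(t) = ∫ₐᵇ (x(t) - x(s)) ds`; Cauchy–Schwarz then gives
`∫ ‖x‖² ≤ (b - a)² ∫ ‖ẋ‖²`. For an equivariant loop the mean over a period is fixed by every
`ρ g`, because `t ↦ ε(g) t + c(g)` preserves the integral of a `T`-periodic function, so
`X^G = 0` forces the mean to vanish and `α = T` works.
-/

open MeasureTheory Set
open scoped Interval

section Poincare

variable {E : Type*} [NormedAddCommGroup E] [NormedSpace ℝ E] [CompleteSpace E]
  {x : ℝ → E} {a b : ℝ}

theorem sq_intervalIntegral_le_mul_intervalIntegral_sq {f : ℝ → ℝ} (hf : Continuous f)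
    (hab : a ≤ b) : (∫ t in a..b, f t) ^ 2 ≤ (b - a) * ∫ t in a..b, f t ^ 2 := by
  set I := ∫ t in a..b, f t
  set J := ∫ t in a..b, f t ^ 2
  have hexpand : ∫ t in a..b, ((b - a) * f t - I) ^ 2 = (b - a) * ((b - a) * J - I ^ 2) := by
    have hsplit : ∀ t, ((b - a) * f t - I) ^ 2
        = (b - a) ^ 2 * f t ^ 2 - 2 * (b - a) * I * f t + I ^ 2 := fun t => by ring
    have hf₁ : IntervalIntegrable f volume a b := hf.intervalIntegrable a b
    have hf₂ : IntervalIntegrable (fun t => f t ^ 2) volume a b :=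
      (hf.pow 2).intervalIntegrable a b
    simp_rw [hsplit]
    rw [intervalIntegral.integral_add ((hf₂.const_mul _).sub (hf₁.const_mul _))
        intervalIntegrable_const, intervalIntegral.integral_sub (hf₂.const_mul _)
        (hf₁.const_mul _), intervalIntegral.integral_const_mul,
      intervalIntegral.integral_const_mul, intervalIntegral.integral_const, smul_eq_mul]
    ring
  have hnonneg : 0 ≤ (b - a) * ((b - a) * J - I ^ 2) :=
    hexpand ▸ intervalIntegral.integral_nonneg hab fun t _ => sq_nonneg _
  rcases (sub_nonneg.2 hab).eq_or_lt with hL | hL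
  · simp [I, ← sub_eq_zero.1 hL.symm]
  · nlinarith [(mul_nonneg_iff_of_pos_left hL).1 hnonneg]

theorem norm_sub_le_intervalIntegral_norm_deriv (hx : ContDiff ℝ 1 x) {s t : ℝ}
    (hs : s ∈ Icc a b) (ht : t ∈ Icc a b) :
    ‖x t - x s‖ ≤ ∫ u in a..b, ‖deriv x u‖ := by
  have hab : a ≤ b := hs.1.trans hs.2
  have hst : Ι s t ⊆ Ι a b := by
    rw [uIoc_of_le hab]; exact Ioc_subset_Ioc (le_min hs.1 ht.1) (max_le hs.2 ht.2)
  calc ‖x t - x s‖ = ‖∫ u in s..t, deriv x u‖ := by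
        rw [intervalIntegral.integral_deriv_of_contDiffOn_uIcc hx.contDiffOn]
    _ ≤ |∫ u in s..t, ‖deriv x u‖| := intervalIntegral.norm_integral_le_abs_integral_norm
    _ ≤ |∫ u in a..b, ‖deriv x u‖| := intervalIntegral.abs_integral_mono_interval hst
        (ae_of_all _ fun _ => norm_nonneg _)
        ((hx.continuous_deriv le_rfl).norm.intervalIntegrable a b)
    _ = ∫ u in a..b, ‖deriv x u‖ :=
        abs_of_nonneg (intervalIntegral.integral_nonneg hab fun _ _ => norm_nonneg _)

theorem norm_le_intervalIntegral_norm_deriv_of_integral_eq_zero (hx : ContDiff ℝ 1 x)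
    (hab : a < b) (hmean : ∫ s in a..b, x s = 0) {t : ℝ} (ht : t ∈ Icc a b) :
    ‖x t‖ ≤ ∫ u in a..b, ‖deriv x u‖ := by
  set D := ∫ u in a..b, ‖deriv x u‖
  have hL : 0 < b - a := sub_pos.2 hab
  have hrepr : (b - a) • x t = ∫ s in a..b, (x t - x s) := by
    rw [intervalIntegral.integral_sub intervalIntegrable_const
      (hx.continuous.intervalIntegrable a b), hmean, intervalIntegral.integral_const, sub_zero]
  have hbound : (b - a) * ‖x t‖ ≤ (b - a) * D := by
    calc (b - a) * ‖x t‖ = ‖∫ s in a..b, (x t - x s)‖ := by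
          rw [← hrepr, norm_smul, Real.norm_of_nonneg hL.le]
      _ ≤ ∫ s in a..b, ‖x t - x s‖ := intervalIntegral.norm_integral_le_integral_norm hab.le
      _ ≤ ∫ _ in a..b, D := intervalIntegral.integral_mono_on hab.le
          ((continuous_const.sub hx.continuous).norm.intervalIntegrable a b)
          intervalIntegrable_const
          fun s hs => norm_sub_le_intervalIntegral_norm_deriv hx hs ht
      _ = (b - a) * D := by rw [intervalIntegral.integral_const, smul_eq_mul]
  exact le_of_mul_le_mul_left hbound hL

theorem intervalIntegral_norm_sq_le_of_integral_eq_zero (hx : ContDiff ℝ 1 x)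
    (hab : a < b) (hmean : ∫ s in a..b, x s = 0) :
    ∫ t in a..b, ‖x t‖ ^ 2 ≤ (b - a) ^ 2 * ∫ t in a..b, ‖deriv x t‖ ^ 2 := by
  set D := ∫ u in a..b, ‖deriv x u‖
  calc ∫ t in a..b, ‖x t‖ ^ 2 ≤ ∫ _ in a..b, D ^ 2 := intervalIntegral.integral_mono_on hab.le
        ((hx.continuous.norm.pow 2).intervalIntegrable a b) intervalIntegrable_const
        fun t ht => pow_le_pow_left₀ (norm_nonneg _)
          (norm_le_intervalIntegral_norm_deriv_of_integral_eq_zero hx hab hmean ht) 2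
    _ = (b - a) * D ^ 2 := by rw [intervalIntegral.integral_const, smul_eq_mul]
    _ ≤ (b - a) * ((b - a) * ∫ t in a..b, ‖deriv x t‖ ^ 2) :=
        mul_le_mul_of_nonneg_left (sq_intervalIntegral_le_mul_intervalIntegral_sq
          (hx.continuous_deriv le_rfl).norm hab.le) (sub_nonneg.2 hab.le)
    _ = (b - a) ^ 2 * ∫ t in a..b, ‖deriv x t‖ ^ 2 := by ring

end Poincare

theorem Function.Periodic.intervalIntegral_comp_mul_add {E : Type*} [NormedAddCommGroup E]
    [NormedSpace ℝ E] {x : ℝ → E} {T : ℝ} (hx : Function.Periodic x T) {ε : ℝ}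
    (hε : ε = 1 ∨ ε = -1) (c : ℝ) :
    ∫ t in (0 : ℝ)..T, x (ε * t + c) = ∫ t in (0 : ℝ)..T, x t := by
  rcases hε with rfl | rfl
  · simpa [add_comm] using hx.intervalIntegral_add_eq c 0
  · simpa [neg_mul, one_mul, ← sub_eq_neg_add, intervalIntegral.integral_comp_sub_left]
      using hx.intervalIntegral_add_eq (c - T) 0

theorem Function.Periodic.map_intervalIntegral_eq_self {E : Type*} [NormedAddCommGroup E]
    [NormedSpace ℝ E] [CompleteSpace E] {x : ℝ → E} {T : ℝ} (hx : Function.Periodic x T)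
    (hcont : Continuous x) (L : E →L[ℝ] E) {ε c : ℝ} (hε : ε = 1 ∨ ε = -1)
    (hequiv : ∀ t, x (ε * t + c) = L (x t)) :
    L (∫ t in (0 : ℝ)..T, x t) = ∫ t in (0 : ℝ)..T, x t := by
  rw [← L.intervalIntegral_comp_comm (hcont.intervalIntegrable 0 T), ← funext hequiv,
    hx.intervalIntegral_comp_mul_add hε]

theorem stmt_13_general {G : Type*} [Group G]
    {X : Type*} [NormedAddCommGroup X] [InnerProductSpace ℝ X]
    [FiniteDimensional ℝ X]
    (ρ : G →* (X ≃ₗᵢ[ℝ] X))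
    (hfix : ∀ v : X, (∀ g : G, ρ g v = v) → v = 0)
    (T : ℝ) (hT : 0 < T)
    (ε : G → ℝ) (c : G → ℝ)
    (hε : ∀ g, ε g = 1 ∨ ε g = -1) :
    ∃ α > 0, ∀ x : ℝ → X, ContDiff ℝ 1 x → Function.Periodic x T →
      (∀ (g : G) (t : ℝ), x (ε g * t + c g) = ρ g (x t)) →
      ∫ t in (0:ℝ)..T, ‖x t‖ ^ 2 ≤ α ^ 2 * ∫ t in (0:ℝ)..T, ‖deriv x t‖ ^ 2 := by
  refine ⟨T, hT, fun x hx hper hequiv => ?_⟩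
  have hmean : ∫ t in (0:ℝ)..T, x t = 0 := hfix _ fun g =>
    hper.map_intervalIntegral_eq_self hx.continuous (ρ g : X →L[ℝ] X) (hε g) (hequiv g)
  simpa using intervalIntegral_norm_sq_le_of_integral_eq_zero hx hT hmean

/-- Poincaré inequality for symmetric loops: if a finite group `G` acts
orthogonally on `X` with no nonzero fixed vector, and acts on the time circle
`ℝ/Tℤ` by isometries `t ↦ ε(g) t + c(g)` (through a finite subgroup of
`O(2)`), then there is `α > 0` such that `‖x‖_{L²} ≤ α ‖ẋ‖_{L²}` for every
`G`-equivariant (smooth, `T`-periodic) loop `x`. -/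
theorem stmt_13 {G : Type*} [Group G] [Finite G]
    {X : Type*} [NormedAddCommGroup X] [InnerProductSpace ℝ X]
    [FiniteDimensional ℝ X]
    (ρ : G →* (X ≃ₗᵢ[ℝ] X))
    (hfix : ∀ v : X, (∀ g : G, ρ g v = v) → v = 0)
    (T : ℝ) (hT : 0 < T)
    (ε : G → ℝ) (c : G → ℝ)
    (hε : ∀ g, ε g = 1 ∨ ε g = -1)
    (hone : ε 1 = 1 ∧ c 1 = 0)
    (hmul : ∀ g h : G, ε (g * h) = ε g * ε h ∧
      ∃ k : ℤ, c (g * h) = ε g * c h + c g + k * T) :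
    ∃ α > 0, ∀ x : ℝ → X, ContDiff ℝ 1 x → Function.Periodic x T →
      (∀ (g : G) (t : ℝ), x (ε g * t + c g) = ρ g (x t)) →
      ∫ t in (0:ℝ)..T, ‖x t‖ ^ 2 ≤ α ^ 2 * ∫ t in (0:ℝ)..T, ‖deriv x t‖ ^ 2 :=
  stmt_13_general ρ hfix T hT ε c hε
end

section
/- (Palais principle of symmetric criticality, finite-group Hilbert space version) Let G be a finite group acting by linear isometries on a Hilbert space Λ and let 𝒜: Λ → ℝ be a G-invariant C¹ functional. Then every critical point of the restriction of 𝒜 to the fixed subspace Λ^G is a critical point of 𝒜 on Λ. -/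
/-!
The differential `L = d𝒜(x₀)` at a fixed point `x₀` of the action is itself invariant,
`L ∘ ρ g = L`, because `𝒜 ∘ ρ g = 𝒜` and `ρ g` fixes `x₀`. Hence `L v = L w` where
`w = |G|⁻¹ ∑_g ρ g v` is the average of `v` over the orbit. Since `w` is a fixed vector,
`L w = 0` by hypothesis, so `L` vanishes identically.
-/

namespace Representation

variable {k G V W : Type*} [CommRing k] [Group G] [AddCommGroup V] [Module k V]
  [AddCommMonoid W] [Module k W] (ρ : Representation k G V)

theorem comp_averageMap_of_forall_comp_eq [Fintype G] [Invertible (Fintype.card G : k)]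
    {L : V →ₗ[k] W} (hL : ∀ g, L ∘ₗ ρ g = L) : L ∘ₗ ρ.averageMap = L := by
  ext v
  have hLg (g : G) : L (ρ g v) = L v := LinearMap.congr_fun (hL g) v
  simp [GroupAlgebra.average, map_sum, hLg, Finset.card_univ,
    ← Nat.cast_smul_eq_nsmul k, smul_smul]

theorem eq_zero_of_forall_comp_eq_of_invariants [Fintype G] [Invertible (Fintype.card G : k)]
    {L : V →ₗ[k] W} (hL : ∀ g, L ∘ₗ ρ g = L) (h0 : ∀ v ∈ ρ.invariants, L v = 0) : L = 0 := by
  ext v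
  rw [← ρ.comp_averageMap_of_forall_comp_eq hL, LinearMap.comp_apply]
  exact h0 _ (ρ.averageMap_invariant v)

end Representation

def LinearIsometryEquiv.toLinearMapMonoidHom {R E : Type*} [Semiring R]
    [SeminormedAddCommGroup E] [Module R E] : (E ≃ₗᵢ[R] E) →* (E →ₗ[R] E) where
  toFun e := e.toLinearEquiv.toLinearMap
  map_one' := rfl
  map_mul' _ _ := rfl

theorem fderiv_comp_eq_of_comp_eq {𝕜 E F : Type*} [NontriviallyNormedField 𝕜]
    [NormedAddCommGroup E] [NormedSpace 𝕜 E] [NormedAddCommGroup F] [NormedSpace 𝕜 F]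
    (e : E ≃L[𝕜] E) {f : E → F} (hf : f ∘ e = f) {x : E} (hx : e x = x) :
    (fderiv 𝕜 f x).comp (e : E →L[𝕜] E) = fderiv 𝕜 f x := by
  simpa [hf, hx] using (e.comp_right_fderiv (f := f) (x := x)).symm

theorem stmt_15_general {G : Type*} [Group G] [Finite G]
    {Λ : Type*} [NormedAddCommGroup Λ] [InnerProductSpace ℝ Λ]
    (ρ : G →* (Λ ≃ₗᵢ[ℝ] Λ))
    (𝒜 : Λ → ℝ)
    (hinv : ∀ (g : G) (x : Λ), 𝒜 (ρ g x) = 𝒜 x)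
    (x₀ : Λ) (hx₀ : ∀ g : G, ρ g x₀ = x₀)
    (hcrit : ∀ v : Λ, (∀ g : G, ρ g v = v) → fderiv ℝ 𝒜 x₀ v = 0) :
    fderiv ℝ 𝒜 x₀ = 0 := by
  cases nonempty_fintype G
  let : Invertible (Fintype.card G : ℝ) := invertibleOfNonzero (by positivity)
  let σ : Representation ℝ G Λ := LinearIsometryEquiv.toLinearMapMonoidHom.comp ρ
  have hL (g : G) : (fderiv ℝ 𝒜 x₀ : Λ →ₗ[ℝ] ℝ) ∘ₗ σ g = fderiv ℝ 𝒜 x₀ :=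
    congrArg ContinuousLinearMap.toLinearMap <|
      fderiv_comp_eq_of_comp_eq (ρ g).toContinuousLinearEquiv (funext (hinv g)) (hx₀ g)
  exact ContinuousLinearMap.coe_injective (σ.eq_zero_of_forall_comp_eq_of_invariants hL hcrit)

/-- Palais principle of symmetric criticality (finite group, Hilbert space
version): if a finite group `G` acts by linear isometries on a Hilbert space
`Λ` and `𝒜 : Λ → ℝ` is a `G`-invariant `C¹` functional, then any point of the
fixed subspace `Λ^G` at which the differential of `𝒜` vanishes on `Λ^G` is a
critical point of `𝒜` on all of `Λ`. -/
theorem stmt_15 {G : Type*} [Group G] [Finite G]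
    {Λ : Type*} [NormedAddCommGroup Λ] [InnerProductSpace ℝ Λ]
    [CompleteSpace Λ]
    (ρ : G →* (Λ ≃ₗᵢ[ℝ] Λ))
    (𝒜 : Λ → ℝ) (h𝒜 : ContDiff ℝ 1 𝒜)
    (hinv : ∀ (g : G) (x : Λ), 𝒜 (ρ g x) = 𝒜 x)
    (x₀ : Λ) (hx₀ : ∀ g : G, ρ g x₀ = x₀)
    (hcrit : ∀ v : Λ, (∀ g : G, ρ g v = v) → fderiv ℝ 𝒜 x₀ v = 0) :
    fderiv ℝ 𝒜 x₀ = 0 :=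
  stmt_15_general ρ 𝒜 hinv x₀ hx₀ hcrit
end

section
/- Let D ⊆ ℝ² be the set of pairs (m, θ) with m > 0 and 0 < θ < π/2 such that inf{F(m, θ, l, r₀, c) : l > r₀ > 0, l > c > 0} < 0, where F is as defined in the previous statement. Then D is open and non-empty. -/
open Real

/-- The difference between the action of the symmetric test path and the
action of the Euler solution, as a function of the parameters
`(m, θ, l, r₀, c)`. -/
noncomputable def actionDifference (m θ l r₀ c : ℝ) : ℝ :=
  l ^ 2 * θ ^ 2 * (1 + 2 / m) + c ^ 2
    + (1 / 12) * (3 * r₀ ^ 2 + c ^ 2 + 3 * c * r₀) * (π - 2 * θ) ^ 2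
    + m ^ 2 / (m * (l - r₀) + 2 * l)
    + m / Real.sqrt ((r₀ + c) ^ 2 + l ^ 2 * (1 + 2 / m) ^ 2)
    + (1 / (2 * c)) * Real.log (1 + c / r₀)
    - (3 / 2) * ((1 / 2 + 2 * m) ^ 2 * (π / 2 - θ)) ^ ((1 : ℝ) / 3)

/-- The set `D` of parameters `(m, θ)` for which the infimum of the action
difference over the admissible `(l, r₀, c)` is negative. -/
noncomputable def paramSet : Set (ℝ × ℝ) :=
  {p | 0 < p.1 ∧ 0 < p.2 ∧ p.2 < π / 2 ∧
    ∃ l r₀ c : ℝ, l > r₀ ∧ r₀ > 0 ∧ l > c ∧ c > 0 ∧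
      actionDifference p.1 p.2 l r₀ c < 0}

/-! For fixed admissible `(l, r₀, c)` the action difference is continuous in `(m, θ)` on `m > 0`,
so `D` is a union of open sets. It is non-empty because at `(m, θ) = (2, π / 8)`,
`(l, r₀, c) = (1, 0.4, 0.3)` the action difference is about `-0.36`, which survives the crude
bounds `π ∈ (3.1415, 3.15)`, `log 1.75 ≤ 0.6` and `∛23.85 ≥ 2.87`. -/

lemma continuousOn_actionDifference {l r₀ : ℝ} (c : ℝ) (hl : 0 < l) (hr₀l : r₀ ≤ l) :
    ContinuousOn (fun p : ℝ × ℝ => actionDifference p.1 p.2 l r₀ c) {p | 0 < p.1} := by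
  intro p (hp : 0 < p.1)
  have hden : p.1 * (l - r₀) + 2 * l ≠ 0 := by nlinarith
  have hsqrt : √((r₀ + c) ^ 2 + l ^ 2 * (1 + 2 / p.1) ^ 2) ≠ 0 := by positivity
  unfold actionDifference
  fun_prop (disch := first | exact hp.ne' | exact hden | exact hsqrt | norm_num)

lemma isOpen_paramSet : IsOpen paramSet := by
  rw [isOpen_iff_forall_mem_open]
  rintro p ⟨hm, hθ, hθπ, l, r₀, c, hr₀l, hr₀, hcl, hc, hneg⟩
  refine ⟨{q | 0 < q.1 ∧ 0 < q.2 ∧ q.2 < π / 2} ∩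
      (fun q : ℝ × ℝ => actionDifference q.1 q.2 l r₀ c) ⁻¹' Set.Iio 0, ?_, ?_, ?_⟩
  · rintro q ⟨⟨hqm, hqθ, hqθπ⟩, hqneg⟩
    exact ⟨hqm, hqθ, hqθπ, l, r₀, c, hr₀l, hr₀, hcl, hc, hqneg⟩
  · refine ((continuousOn_actionDifference c (hr₀.trans hr₀l) hr₀l.le).mono
      fun q hq => hq.1).isOpen_inter_preimage ?_ isOpen_Iio
    exact (isOpen_lt continuous_const continuous_fst).inter
      ((isOpen_lt continuous_const continuous_snd).inter (isOpen_lt continuous_snd continuous_const))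
  · exact ⟨⟨hm, hθ, hθπ⟩, hneg⟩

lemma actionDifference_witness_neg : actionDifference 2 (π / 8) 1 0.4 0.3 < 0 := by
  have hπ₁ : 3.1415 < π := pi_gt_d4
  have hπ₂ : π < 3.15 := pi_lt_d2
  have hsqrt : 2.11 ≤ √((0.4 + 0.3) ^ 2 + 1 ^ 2 * (1 + 2 / 2) ^ 2 : ℝ) :=
    (le_sqrt (by norm_num) (by positivity)).2 (by norm_num)
  have hlog : log (1 + 0.3 / 0.4 : ℝ) ≤ 0.6 := by
    rw [log_le_iff_le_exp (by norm_num)]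
    exact le_trans (by norm_num) (quadratic_le_exp_of_nonneg (by norm_num : (0 : ℝ) ≤ 0.6))
  have hcbrt : 2.87 ≤ ((1 / 2 + 2 * 2) ^ 2 * (π / 2 - π / 8) : ℝ) ^ ((1 : ℝ) / 3) := by
    rw [one_div (3 : ℝ), le_rpow_inv_iff_of_pos (by norm_num) (by nlinarith) (by norm_num)]
    norm_num
    nlinarith
  have hdiv : 2 / √((0.4 + 0.3) ^ 2 + 1 ^ 2 * (1 + 2 / 2) ^ 2 : ℝ) ≤ 2 / 2.11 :=
    div_le_div_of_nonneg_left (by norm_num) (by norm_num) hsqrt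
  unfold actionDifference
  nlinarith

/-- The set `D` is open and non-empty. -/
theorem stmt_19 : IsOpen paramSet ∧ paramSet.Nonempty := by
  refine ⟨isOpen_paramSet, (2, π / 8), two_pos, by positivity, by linarith [pi_pos],
    1, 0.4, 0.3, by norm_num, by norm_num, by norm_num, by norm_num,
    actionDifference_witness_neg⟩
end
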